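/- arXiv:2002.03243 — 3 statements merged into one kernel-verified Lean document; each statement's English description precedes it below -/
import Mathlib

section
/- 𝔰𝔭 = 𝔨 ⊕ 𝔥 as complex vector spaces; that is, 𝔨 ∩ 𝔥 = 0 and every X ∈ 𝔰𝔭 can be written (uniquely) as X = Y + Z with Y ∈ 𝔨 and Z ∈ 𝔥. -/
/-!
Setup: `V` is the complex vector space with basis `{e_i, f_i}_{i ∈ ℕ}`,
realized as finitely supported functions on `ℕ ⊕ ℕ` (`Sum.inl i ↔ e_i`,
`Sum.inr i ↔ f_i`).  `ω` is the alternating form with `ω(e_i, f_j) = δ_{ij}`,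
`ω(e_i,e_j) = ω(f_i,f_j) = 0`, and `ξ` is the functional with
`ξ(e_i) = ξ(f_i) = 1`.  `MemSp X` says `X` lies in the Lie algebra `𝔰𝔭`,
`MemK X` that `X ∈ 𝔨` (sum of the upper-triangular Borels of the `𝔰𝔭₂`-blocks)
and `MemH X` that `X ∈ 𝔥` (the Lie algebra of the stabilizer of `ξ`).
-/

noncomputable section

/-- The complex vector space with basis `{e_i, f_i}_{i ∈ ℕ}`. -/
abbrev V : Type := (ℕ ⊕ ℕ) →₀ ℂ

/-- The basis vector `e_i`. -/
def e (i : ℕ) : V := Finsupp.single (Sum.inl i) 1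

/-- The basis vector `f_i`. -/
def f (i : ℕ) : V := Finsupp.single (Sum.inr i) 1

/-- The symplectic form `ω : ω(e_i, f_j) = δ_{ij}`, `ω(e_i,e_j) = ω(f_i,f_j) = 0`. -/
def omegaForm (v w : V) : ℂ :=
  ∑ᶠ i : ℕ, (v (Sum.inl i) * w (Sum.inr i) - v (Sum.inr i) * w (Sum.inl i))

/-- The functional `ξ` with `ξ(e_i) = ξ(f_i) = 1` for all `i`. -/
def xiFun (v : V) : ℂ := v.sum fun _ c => c

/-- Membership in `𝔰𝔭`: `X` kills all but finitely many basis vectors and is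
ω-skew. -/
def MemSp (X : V →ₗ[ℂ] V) : Prop :=
  {i : ℕ | X (e i) ≠ 0 ∨ X (f i) ≠ 0}.Finite ∧
    ∀ v w : V, omegaForm (X v) w + omegaForm v (X w) = 0

/-- Membership in `𝔨`: there are finitely supported sequences `(t_i)`, `(u_i)` with
`X(e_i) = t_i e_i` and `X(f_i) = u_i e_i − t_i f_i` for all `i`. -/
def MemK (X : V →ₗ[ℂ] V) : Prop :=
  MemSp X ∧ ∃ t u : ℕ → ℂ, {i : ℕ | t i ≠ 0}.Finite ∧ {i : ℕ | u i ≠ 0}.Finite ∧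
    (∀ i : ℕ, X (e i) = t i • e i) ∧ (∀ i : ℕ, X (f i) = u i • e i - t i • f i)

/-- Membership in `𝔥`: `ξ ∘ X = 0`. -/
def MemH (X : V →ₗ[ℂ] V) : Prop :=
  MemSp X ∧ ∀ v : V, xiFun (X v) = 0

/-!
An element of `𝔨` with parameters `(t_i)`, `(u_i)` satisfies `ξ(X e_i) = t_i` and
`ξ(X f_i) = u_i - t_i`, so `X ↦ (ξ(X e_i), ξ(X f_i))_i` restricted to `𝔨` is a bijection onto
finitely supported pairs of sequences. Injectivity gives `𝔨 ∩ 𝔥 = 0`; for `X ∈ 𝔰𝔭`, the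
element `Y ∈ 𝔨` with the same values has `X - Y ∈ 𝔥`.
-/

lemma finite_support_omega_summand (v w : V) :
    (Function.support fun i : ℕ =>
      v (Sum.inl i) * w (Sum.inr i) - v (Sum.inr i) * w (Sum.inl i)).Finite := by
  refine ((v.support.finite_toSet.preimage Sum.inl_injective.injOn).union
    (v.support.finite_toSet.preimage Sum.inr_injective.injOn)).subset fun i hi => ?_
  by_contra h
  simp only [Set.mem_union, Set.mem_preimage, Finset.mem_coe, Finsupp.mem_support_iff,
    not_or, not_not] at h
  simp [h.1, h.2] at hi

def omegaBilin : LinearMap.BilinForm ℂ V :=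
  LinearMap.mk₂ ℂ omegaForm
    (fun v v' w => by
      rw [omegaForm, omegaForm, omegaForm, ← finsum_add_distrib
        (finite_support_omega_summand v w) (finite_support_omega_summand v' w)]
      exact finsum_congr fun i => by simp only [Finsupp.add_apply]; ring)
    (fun c v w => by
      rw [omegaForm, omegaForm, smul_eq_mul, mul_finsum]
      exact finsum_congr fun i => by simp only [Finsupp.smul_apply, smul_eq_mul]; ring)
    (fun v w w' => by
      rw [omegaForm, omegaForm, omegaForm, ← finsum_add_distrib
        (finite_support_omega_summand v w) (finite_support_omega_summand v w')]
      exact finsum_congr fun i => by simp only [Finsupp.add_apply]; ring)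
    (fun c v w => by
      rw [omegaForm, omegaForm, smul_eq_mul, mul_finsum]
      exact finsum_congr fun i => by simp only [Finsupp.smul_apply, smul_eq_mul]; ring)

lemma omegaBilin_apply (v w : V) : omegaBilin v w = omegaForm v w := rfl

def xiLin : V →ₗ[ℂ] ℂ := Finsupp.linearCombination ℂ fun _ => 1

lemma xiLin_apply (v : V) : xiLin v = xiFun v := by
  simp [xiLin, xiFun, Finsupp.linearCombination_apply]

@[simp] lemma omegaBilin_e_e (i j : ℕ) : omegaBilin (e i) (e j) = 0 :=
  finsum_eq_zero_of_forall_eq_zero fun k => by simp [e]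

@[simp] lemma omegaBilin_f_f (i j : ℕ) : omegaBilin (f i) (f j) = 0 :=
  finsum_eq_zero_of_forall_eq_zero fun k => by simp [f]

@[simp] lemma omegaBilin_e_f (i j : ℕ) : omegaBilin (e i) (f j) = if i = j then 1 else 0 := by
  rw [omegaBilin_apply, omegaForm,
    finsum_eq_single _ i fun k hk => by simp [e, f, Finsupp.single_apply, Ne.symm hk]]
  simp [e, f, Finsupp.single_apply, eq_comm]

@[simp] lemma omegaBilin_f_e (i j : ℕ) : omegaBilin (f i) (e j) = -if i = j then 1 else 0 := by
  rw [omegaBilin_apply, omegaForm,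
    finsum_eq_single _ i fun k hk => by simp [e, f, Finsupp.single_apply, Ne.symm hk]]
  simp [e, f, Finsupp.single_apply, eq_comm]

@[simp] lemma xiLin_e (i : ℕ) : xiLin (e i) = 1 := by simp [xiLin, e]

@[simp] lemma xiLin_f (i : ℕ) : xiLin (f i) = 1 := by simp [xiLin, f]

lemma linearMap_ext_ef {N : Type*} [AddCommMonoid N] [Module ℂ N] {φ ψ : V →ₗ[ℂ] N}
    (he : ∀ i, φ (e i) = ψ (e i)) (hf : ∀ i, φ (f i) = ψ (f i)) : φ = ψ :=
  Finsupp.lhom_ext' fun a => LinearMap.ext_ring <| by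
    rcases a with i | i
    exacts [he i, hf i]

lemma bilinForm_ext_ef {B B' : LinearMap.BilinForm ℂ V}
    (hee : ∀ i j, B (e i) (e j) = B' (e i) (e j))
    (hef : ∀ i j, B (e i) (f j) = B' (e i) (f j))
    (hfe : ∀ i j, B (f i) (e j) = B' (f i) (e j))
    (hff : ∀ i j, B (f i) (f j) = B' (f i) (f j)) :
    B = B' :=
  linearMap_ext_ef (fun i => linearMap_ext_ef (hee i) (hef i))
    (fun i => linearMap_ext_ef (hfe i) (hff i))

lemma skew_iff (X : V →ₗ[ℂ] V) :
    (∀ v w : V, omegaForm (X v) w + omegaForm v (X w) = 0) ↔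
      omegaBilin ∘ₗ X + omegaBilin.compl₂ X = 0 := by
  simp [LinearMap.ext_iff, omegaBilin_apply]

lemma MemSp.sub {X Y : V →ₗ[ℂ] V} (hX : MemSp X) (hY : MemSp Y) : MemSp (X - Y) := by
  refine ⟨(hX.1.union hY.1).subset fun i hi => ?_, fun v w => ?_⟩
  · by_contra h
    simp only [Set.mem_union, Set.mem_ofPred_eq, not_or, not_not] at h
    simp [h] at hi
  · have hX' := hX.2 v w
    have hY' := hY.2 v w
    simp only [LinearMap.sub_apply, ← omegaBilin_apply, map_sub] at hX' hY' ⊢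
    linear_combination hX' - hY'

def kMap (t u : ℕ → ℂ) : V →ₗ[ℂ] V :=
  Finsupp.linearCombination ℂ (Sum.elim (fun i => t i • e i) fun i => u i • e i - t i • f i)

@[simp] lemma kMap_e (t u : ℕ → ℂ) (i : ℕ) : kMap t u (e i) = t i • e i := by
  simp [kMap, e]

@[simp] lemma kMap_f (t u : ℕ → ℂ) (i : ℕ) :
    kMap t u (f i) = u i • e i - t i • f i := by
  simp [kMap, f]

lemma kMap_zero : kMap 0 0 = 0 :=
  linearMap_ext_ef (fun i => by simp) fun i => by simp

lemma kMap_skew (t u : ℕ → ℂ) (v w : V) :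
    omegaForm (kMap t u v) w + omegaForm v (kMap t u w) = 0 := by
  revert v w
  rw [skew_iff]
  apply bilinForm_ext_ef <;> intro i j <;> by_cases h : i = j <;> simp [h]

lemma memK_kMap {t u : ℕ → ℂ} (ht : {i | t i ≠ 0}.Finite) (hu : {i | u i ≠ 0}.Finite) :
    MemK (kMap t u) := by
  refine ⟨⟨(ht.union hu).subset fun i hi => ?_, kMap_skew t u⟩, t, u, ht, hu, kMap_e t u,
    kMap_f t u⟩
  by_contra h
  simp only [Set.mem_union, Set.mem_ofPred_eq, not_or, not_not] at h
  simp [h] at hi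

lemma MemK.exists_eq_kMap {X : V →ₗ[ℂ] V} (hX : MemK X) :
    ∃ t u : ℕ → ℂ, X = kMap t u := by
  obtain ⟨-, t, u, -, -, he, hf⟩ := hX
  exact ⟨t, u, linearMap_ext_ef (fun i => by simp [he]) fun i => by simp [hf]⟩

lemma xiFun_comp_eq_zero {X : V →ₗ[ℂ] V} (he : ∀ i, xiFun (X (e i)) = 0)
    (hf : ∀ i, xiFun (X (f i)) = 0) (v : V) : xiFun (X v) = 0 := by
  have : xiLin.comp X = 0 :=
    linearMap_ext_ef (fun i => by simp [xiLin_apply, he]) fun i => by simp [xiLin_apply, hf]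
  simpa [xiLin_apply] using LinearMap.congr_fun this v

/-- `𝔰𝔭 = 𝔨 ⊕ 𝔥`: the intersection of `𝔨` and `𝔥` is zero, and every element of
`𝔰𝔭` is a sum of an element of `𝔨` and an element of `𝔥`. -/
theorem sp_eq_k_oplus_h :
    (∀ X : V →ₗ[ℂ] V, MemK X → MemH X → X = 0) ∧
    (∀ X : V →ₗ[ℂ] V, MemSp X → ∃ Y Z : V →ₗ[ℂ] V, MemK Y ∧ MemH Z ∧ X = Y + Z) := by
  constructor
  · rintro X hK ⟨-, hξ⟩
    obtain ⟨t, u, rfl⟩ := hK.exists_eq_kMap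
    have ht : t = 0 := funext fun i => by simpa [← xiLin_apply] using hξ (e i)
    subst ht
    have hu : u = 0 := funext fun i => by simpa [← xiLin_apply] using hξ (f i)
    rw [hu, kMap_zero]
  · intro X hX
    set t : ℕ → ℂ := fun i => xiFun (X (e i))
    set u : ℕ → ℂ := fun i => xiFun (X (f i)) + xiFun (X (e i))
    have ht : {i | t i ≠ 0}.Finite := hX.1.subset fun i hi => by
      by_contra! h
      simp_all [t, xiFun]
    have hu : {i | u i ≠ 0}.Finite := hX.1.subset fun i hi => by
      by_contra! h
      simp_all [u, xiFun]
    have hY := memK_kMap ht hu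
    refine ⟨kMap t u, X - kMap t u, hY, ⟨hX.sub hY.1, xiFun_comp_eq_zero ?_ ?_⟩, by abel⟩ <;>
      intro i <;> simp [← xiLin_apply, t, u]

end
end

section
/- Let H' = {g ∈ Sp : g(e_1) = e_1} be the stabilizer of e_1 in Sp. Then every ℂ-linear functional φ : V → ℂ satisfying φ(g v) = φ(v) for all v ∈ V and all g ∈ H' is a scalar multiple of the functional v ↦ ω(e_1, v). In particular, the space of H'-invariant linear functionals on V is one-dimensional. -/
/-!
Setup: `V` is the complex vector space with basis `{e_i, f_i}_{i ∈ ℕ}`, realized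
as finitely supported functions on `ℕ ⊕ ℕ` (`Sum.inl i ↔ e_i`, `Sum.inr i ↔ f_i`).
`ω` is the alternating form with `ω(e_i, f_j) = δ_{ij}`,
`ω(e_i,e_j) = ω(f_i,f_j) = 0`.  `IsSp g` says that `g` belongs to the infinite
symplectic group `Sp`: it preserves `ω` and moves only finitely many basis
vectors.  `H' = {g ∈ Sp : g e₁ = e₁}` is the stabilizer of the first basis
vector `e₁` (here `e 0`).
-/

noncomputable section

/-- Membership in the infinite symplectic group `Sp`. -/
def IsSp (g : V ≃ₗ[ℂ] V) : Prop :=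
  (∀ v w : V, omegaForm (g v) (g w) = omegaForm v w) ∧
    {i : ℕ | g (e i) ≠ e i ∨ g (f i) ≠ f i}.Finite


lemma e_apply (i : ℕ) (b : ℕ ⊕ ℕ) : e i b = if Sum.inl i = b then 1 else 0 :=
  Finsupp.single_apply

lemma f_apply (i : ℕ) (b : ℕ ⊕ ℕ) : f i b = if Sum.inr i = b then 1 else 0 :=
  Finsupp.single_apply

/-- The transvection `v ↦ v + ω(e₀,v) e₀`. -/
def T : V ≃ₗ[ℂ] V :=
  LinearEquiv.ofLinear
    (LinearMap.id + (Finsupp.lapply (Sum.inr 0)).smulRight (e 0))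
    (LinearMap.id - (Finsupp.lapply (Sum.inr 0)).smulRight (e 0))
    (by
      apply LinearMap.ext; intro v
      simp [e_apply, sub_smul, add_smul, Finsupp.lapply_apply])
    (by
      apply LinearMap.ext; intro v
      simp [e_apply, sub_smul, add_smul, Finsupp.lapply_apply])

lemma T_apply (v : V) : T v = v + v (Sum.inr 0) • e 0 := rfl

lemma T_coord (v : V) (b : ℕ ⊕ ℕ) :
    T v b = v b + v (Sum.inr 0) * (if Sum.inl 0 = b then 1 else 0) := by
  rw [T_apply]
  simp [e_apply]

lemma T_isSp : IsSp T := by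
  constructor
  · intro v w
    unfold omegaForm
    apply finsum_congr
    intro j
    simp only [T_coord]
    rcases eq_or_ne j 0 with rfl | hj
    · simp; ring
    · simp [Sum.inl.injEq, (Ne.symm hj)]
  · apply Set.Finite.subset (Set.finite_singleton 0)
    intro i hi
    simp only [Set.mem_setOf_eq] at hi
    by_contra h
    simp only [Set.mem_singleton_iff] at h
    rcases hi with hi | hi
    · exact hi (by rw [T_apply]; simp [e_apply, f_apply])
    · exact hi (by rw [T_apply]; simp [e_apply, f_apply, Sum.inr.injEq, h])

lemma T_fix : T (e 0) = e 0 := by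
  rw [T_apply]; simp [e_apply]

/-- Diagonal map scaling `e i` by 2 and `f i` by 1/2, identity elsewhere. -/
def D (i : ℕ) : V ≃ₗ[ℂ] V :=
  LinearEquiv.ofLinear
    (LinearMap.id + (Finsupp.lapply (Sum.inl i)).smulRight (e i)
      - (2⁻¹ : ℂ) • (Finsupp.lapply (Sum.inr i)).smulRight (f i))
    (LinearMap.id - (2⁻¹ : ℂ) • (Finsupp.lapply (Sum.inl i)).smulRight (e i)
      + (Finsupp.lapply (Sum.inr i)).smulRight (f i))
    (by
      apply LinearMap.ext; intro v
      ext b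
      simp [e_apply, f_apply, Finsupp.lapply_apply]
      rcases eq_or_ne (Sum.inl i : ℕ ⊕ ℕ) b with h | h <;>
        rcases eq_or_ne (Sum.inr i : ℕ ⊕ ℕ) b with h' | h' <;>
        simp [h, h', Ne.symm] <;> ring)
    (by
      apply LinearMap.ext; intro v
      ext b
      simp [e_apply, f_apply, Finsupp.lapply_apply]
      rcases eq_or_ne (Sum.inl i : ℕ ⊕ ℕ) b with h | h <;>
        rcases eq_or_ne (Sum.inr i : ℕ ⊕ ℕ) b with h' | h' <;>
        simp [h, h', Ne.symm] <;> ring)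

lemma D_apply (i : ℕ) (v : V) :
    D i v = v + v (Sum.inl i) • e i - (2⁻¹ : ℂ) • (v (Sum.inr i) • f i) := rfl

lemma D_coord (i : ℕ) (v : V) (b : ℕ ⊕ ℕ) :
    D i v b = v b + v (Sum.inl i) * (if Sum.inl i = b then 1 else 0)
      - 2⁻¹ * (v (Sum.inr i) * (if Sum.inr i = b then 1 else 0)) := by
  rw [D_apply]
  simp [e_apply, f_apply, mul_comm]

lemma D_isSp (i : ℕ) : IsSp (D i) := by
  constructor
  · intro v w
    unfold omegaForm
    apply finsum_congr
    intro j
    simp only [D_coord]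
    rcases eq_or_ne i j with rfl | hj
    · simp; ring
    · simp [Sum.inl.injEq, Sum.inr.injEq, hj]
  · apply Set.Finite.subset (Set.finite_singleton i)
    intro j hj
    simp only [Set.mem_setOf_eq] at hj
    by_contra h
    simp only [Set.mem_singleton_iff] at h
    rcases hj with hj | hj
    · exact hj (by rw [D_apply]; simp [e_apply, f_apply, Sum.inl.injEq, Sum.inr.injEq, h])
    · exact hj (by rw [D_apply]; simp [e_apply, f_apply, Sum.inl.injEq, Sum.inr.injEq, h])

lemma D_fix (i : ℕ) (hi : i ≠ 0) : D i (e 0) = e 0 := by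
  rw [D_apply]; simp [e_apply, f_apply, Sum.inl.injEq, Sum.inr.injEq, (Ne.symm hi)]

lemma D_e (i : ℕ) : D i (e i) = (2 : ℂ) • e i := by
  rw [D_apply]
  simp [e_apply, f_apply]
  module

lemma D_f (i : ℕ) : D i (f i) = (2⁻¹ : ℂ) • f i := by
  rw [D_apply]
  simp [e_apply, f_apply]
  module

lemma omega_e0 (v : V) : omegaForm (e 0) v = v (Sum.inr 0) := by
  unfold omegaForm
  rw [finsum_eq_single _ 0]
  · simp [e_apply]
  · intro i hi
    simp [e_apply, Sum.inl.injEq, Ne.symm hi]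

/-- The functional `v ↦ ω(e₁, v)` is invariant under the stabilizer `H'` of `e₁`
in `Sp`, and every `H'`-invariant ℂ-linear functional on `V` is a scalar multiple
of it; in particular the space of `H'`-invariant functionals is one-dimensional. -/
theorem invariant_functionals_of_stabilizer_of_e1 :
    (∀ g : V ≃ₗ[ℂ] V, IsSp g → g (e 0) = e 0 →
      ∀ v : V, omegaForm (e 0) (g v) = omegaForm (e 0) v) ∧
    (∀ φ : V →ₗ[ℂ] ℂ,
      (∀ g : V ≃ₗ[ℂ] V, IsSp g → g (e 0) = e 0 → ∀ v : V, φ (g v) = φ v) →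
      ∃ c : ℂ, ∀ v : V, φ v = c * omegaForm (e 0) v) := by
  constructor
  · intro g hg hge v
    conv_lhs => rw [← hge]
    exact hg.1 (e 0) v
  · intro φ hφ
    refine ⟨φ (f 0), fun v => ?_⟩
    -- φ vanishes on e i for all i, and on f i for i ≠ 0
    have he0 : φ (e 0) = 0 := by
      have h := hφ T T_isSp T_fix (f 0)
      rw [T_apply] at h
      simp [f_apply] at h
      exact h
    have he : ∀ i : ℕ, φ (e i) = 0 := by
      intro i
      rcases eq_or_ne i 0 with rfl | hi
      · exact he0
      · have h := hφ (D i) (D_isSp i) (D_fix i hi) (e i)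
        rw [D_e] at h
        simp at h
        linear_combination h
    have hf : ∀ i : ℕ, i ≠ 0 → φ (f i) = 0 := by
      intro i hi
      have h := hφ (D i) (D_isSp i) (D_fix i hi) (f i)
      rw [D_f] at h
      simp at h
      linear_combination (-2 : ℂ) * h
    -- conclude
    have key : φ = (φ (f 0)) • (Finsupp.lapply (Sum.inr 0) : V →ₗ[ℂ] ℂ) := by
      apply Finsupp.lhom_ext
      intro a b
      have hb : (Finsupp.single a b : V) = b • Finsupp.single a 1 := by
        rw [Finsupp.smul_single, smul_eq_mul, mul_one]
      rw [hb, map_smul, map_smul]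
      rcases a with i | i
      · have : (Finsupp.single (Sum.inl i) 1 : V) = e i := rfl
        rw [this, he i]
        simp [e_apply]
      · rcases eq_or_ne i 0 with rfl | hi
        · have : (Finsupp.single (Sum.inr 0) 1 : V) = f 0 := rfl
          rw [this]
          simp [f_apply]
        · have : (Finsupp.single (Sum.inr i) 1 : V) = f i := rfl
          rw [this, hf i hi]
          simp [f_apply, Sum.inr.injEq, hi]
    rw [key, omega_e0]
    simp only [LinearMap.smul_apply, Finsupp.lapply_apply, smul_eq_mul]
    simp [f_apply]


end
end

section
/- For an integer i ≥ 0, consider the space of Sp-invariant linear functionals on the i-th exterior power ⋀^i V, i.e., ℂ-linear maps φ : ⋀^i V → ℂ satisfying φ((⋀^i g)(x)) = φ(x) for all x ∈ ⋀^i V and all g ∈ Sp. If i is odd, this space is zero; if i is even, this space is one-dimensional. -/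
/-!
Setup: `V` is the complex vector space with basis `{e_i, f_i}_{i ∈ ℕ}`, realized
as finitely supported functions on `ℕ ⊕ ℕ`.  `ω` is the symplectic form, and
`IsSp g` says that `g` belongs to the infinite symplectic group `Sp`.
`⋀[ℂ]^i V` is the `i`-th exterior power of `V` (a submodule of the exterior
algebra), and `g` acts on it via the induced algebra map `ExteriorAlgebra.map g`
(which carries `⋀^i V` into itself); a functional `φ` on `⋀^i V` is invariant
(`SpInvariantFunctional i φ`) if `φ((⋀^i g)(x)) = φ(x)` for all `x` and all `g ∈ Sp`.
The claim: this space of invariant functionals is zero if `i` is odd and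
one-dimensional if `i` is even.
-/

noncomputable section

/-- `φ` is an `Sp`-invariant linear functional on `⋀^i V`: whenever `g ∈ Sp`
carries `x ∈ ⋀^i V` to `y ∈ ⋀^i V` (inside the exterior algebra), `φ y = φ x`. -/
def SpInvariantFunctional (i : ℕ) (φ : ⋀[ℂ]^i V →ₗ[ℂ] ℂ) : Prop :=
  ∀ g : V ≃ₗ[ℂ] V, IsSp g → ∀ x y : ⋀[ℂ]^i V,
    ExteriorAlgebra.map (g : V →ₗ[ℂ] V) (x : ExteriorAlgebra ℂ V) =
      (y : ExteriorAlgebra ℂ V) → φ y = φ x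

/-!
An `Sp`-invariant functional on `⋀^n V` is the same as an `Sp`-invariant alternating `n`-form on
`V`, and such a form is determined by its values on tuples of distinct basis vectors. The element
of `Sp` scaling one basis vector by `2` and its `ω`-partner by `1/2` kills every such tuple that
contains a basis vector without its partner, hence all of them when `n` is odd. The remaining
tuples are, up to order, `(e_j, f_j)_{j ∈ J}` with `#J = n / 2`, and a finitary permutation of the
indices, which lies in `Sp`, carries any such `J` to any other; so an invariant form is determined
by a single value. For `n = 2k` the alternatization of `v ↦ ∏ ω(v_{2m}, v_{2m+1})` is invariant,
and on `(e_0, f_0, …, e_{k-1}, f_{k-1})` it counts the `2^k k!` permutations preserving the pairs.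
-/

open Function Finset

lemma omegaForm_summand_hasFiniteSupport (v w : V) :
    HasFiniteSupport fun i : ℕ => v (.inl i) * w (.inr i) - v (.inr i) * w (.inl i) := by
  refine ((v.hasFiniteSupport.preimage Sum.inl_injective.injOn).union
    (v.hasFiniteSupport.preimage Sum.inr_injective.injOn)).subset fun i hi => ?_
  by_contra h
  simp_all

def omega : V →ₗ[ℂ] V →ₗ[ℂ] ℂ :=
  LinearMap.mk₂ ℂ omegaForm
    (fun v v' w => by
      simp only [omegaForm, ← finsum_add_distrib (omegaForm_summand_hasFiniteSupport v w)
        (omegaForm_summand_hasFiniteSupport v' w)]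
      exact finsum_congr fun i => by simp only [Finsupp.coe_add, Pi.add_apply]; ring)
    (fun c v w => by
      simp only [omegaForm, smul_eq_mul, mul_finsum]
      exact finsum_congr fun i => by simp only [Finsupp.coe_smul, Pi.smul_apply, smul_eq_mul]; ring)
    (fun v w w' => by
      simp only [omegaForm, ← finsum_add_distrib (omegaForm_summand_hasFiniteSupport v w)
        (omegaForm_summand_hasFiniteSupport v w')]
      exact finsum_congr fun i => by simp only [Finsupp.coe_add, Pi.add_apply]; ring)
    (fun c v w => by
      simp only [omegaForm, smul_eq_mul, mul_finsum]
      exact finsum_congr fun i => by simp only [Finsupp.coe_smul, Pi.smul_apply, smul_eq_mul]; ring)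

lemma omega_apply (v w : V) : omega v w = omegaForm v w := rfl

def omegaSign : ℕ ⊕ ℕ → ℂ := Sum.elim (fun _ => 1) (fun _ => -1)

lemma omegaForm_single_left (x : ℕ ⊕ ℕ) (w : V) :
    omegaForm (Finsupp.single x 1) w = omegaSign x * w x.swap := by
  rcases x with a | a <;> rw [omegaForm, finsum_eq_single _ a fun i hi => by
    simp [Ne.symm hi]] <;> simp [omegaSign]

lemma omegaForm_single_single (x y : ℕ ⊕ ℕ) :
    omegaForm (Finsupp.single x 1) (Finsupp.single y 1) =
      if y = x.swap then omegaSign x else 0 := by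
  rw [omegaForm_single_left, Finsupp.single_apply]
  split_ifs <;> simp_all

lemma omegaForm_map_eq_of_single {g : V →ₗ[ℂ] V}
    (h : ∀ x y, omegaForm (g (Finsupp.single x 1)) (g (Finsupp.single y 1)) =
      omegaForm (Finsupp.single x 1) (Finsupp.single y 1)) (v w : V) :
    omegaForm (g v) (g w) = omegaForm v w := by
  have : omega.compl₁₂ g g = omega :=
    LinearMap.ext_basis Finsupp.basisSingleOne Finsupp.basisSingleOne fun x y => by
      simpa [omega_apply] using h x y
  exact LinearMap.congr_fun₂ this v w

def monomialEquiv (w : ℕ ⊕ ℕ → ℂˣ) (σ : Equiv.Perm (ℕ ⊕ ℕ)) : V ≃ₗ[ℂ] V :=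
  Finsupp.basisSingleOne.equiv (Finsupp.basisSingleOne.unitsSMul w) σ

lemma monomialEquiv_single (w : ℕ ⊕ ℕ → ℂˣ) (σ : Equiv.Perm (ℕ ⊕ ℕ)) (x : ℕ ⊕ ℕ) :
    monomialEquiv w σ (Finsupp.single x 1) = (w (σ x) : ℂ) • Finsupp.single (σ x) 1 := by
  simpa [monomialEquiv, Module.Basis.unitsSMul_apply, Units.smul_def] using
    Finsupp.basisSingleOne.equiv_apply x (Finsupp.basisSingleOne.unitsSMul w) σ

lemma isSp_monomialEquiv {w : ℕ ⊕ ℕ → ℂˣ} {σ : Equiv.Perm (ℕ ⊕ ℕ)}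
    (hswap : ∀ x, σ x.swap = (σ x).swap) (hsign : ∀ x, omegaSign (σ x) = omegaSign x)
    (hw : ∀ x, (w x * w x.swap : ℂ) = 1) (hfin : {x | σ x ≠ x ∨ w x ≠ 1}.Finite) :
    IsSp (monomialEquiv w σ) := by
  refine ⟨omegaForm_map_eq_of_single fun x y => ?_, ?_⟩
  · simp only [LinearEquiv.coe_coe, monomialEquiv_single, ← omega_apply, map_smul,
      LinearMap.smul_apply, smul_eq_mul]
    simp only [omega_apply, omegaForm_single_single, hsign, ← hswap, σ.injective.eq_iff]
    split_ifs with hy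
    · rw [hy, hswap, ← mul_assoc, mul_comm (w (σ x).swap : ℂ), hw, one_mul]
    · rw [mul_zero, mul_zero]
  · refine ((hfin.preimage Sum.inl_injective.injOn).union
      (hfin.preimage Sum.inr_injective.injOn)).subset fun i hi => ?_
    contrapose! hi
    simp only [Set.mem_union, Set.mem_preimage, Set.mem_ofPred_eq, not_or, not_not] at hi
    simp [e, f, monomialEquiv_single, hi]

def scaleWeight (x₀ : ℕ ⊕ ℕ) (t : ℂˣ) (x : ℕ ⊕ ℕ) : ℂˣ :=
  if x = x₀ then t else if x = x₀.swap then t⁻¹ else 1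

lemma isSp_monomialEquiv_scaleWeight (x₀ : ℕ ⊕ ℕ) (t : ℂˣ) :
    IsSp (monomialEquiv (scaleWeight x₀ t) 1) := by
  refine isSp_monomialEquiv (fun _ => rfl) (fun _ => rfl) (fun x => ?_) ?_
  · rcases x₀ with a | a <;> rcases x with b | b <;> by_cases h : b = a <;> simp [scaleWeight, h]
  · refine (Set.toFinite {x₀, x₀.swap}).subset fun x hx => ?_
    by_contra h
    simp_all [scaleWeight]

lemma isSp_monomialEquiv_sumCongr (π : Equiv.Perm ℕ) (hπ : {i | π i ≠ i}.Finite) :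
    IsSp (monomialEquiv 1 (Equiv.sumCongr π π)) := by
  refine isSp_monomialEquiv (by rintro (_ | _) <;> rfl) (by rintro (_ | _) <;> rfl)
    (fun _ => by simp) (((hπ.image Sum.inl).union (hπ.image Sum.inr)).subset ?_)
  rintro (i | i) h <;> simp_all

def omegaPair : MultilinearMap ℂ (fun _ : Bool => V) ℂ :=
  MultilinearMap.mk' (fun u => omega (u false) (u true))
    (fun u i x y => by cases i <;> simp)
    (fun u i c x => by cases i <;> simp)

def pairingProduct (k : ℕ) : MultilinearMap ℂ (fun _ : Fin k × Bool => V) ℂ :=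
  ((MultilinearMap.mkPiAlgebra ℂ (Fin k) ℂ).compMultilinearMap fun _ => omegaPair).domDomCongr
    (Equiv.sigmaEquivProd (Fin k) Bool)

lemma pairingProduct_apply (k : ℕ) (v : Fin k × Bool → V) :
    pairingProduct k v = ∏ m, omegaForm (v (m, false)) (v (m, true)) := rfl

/-- Up to normalisation, the complete contraction by `ω`. -/
def pfaffianForm (k : ℕ) : V [⋀^Fin k × Bool]→ₗ[ℂ] ℂ :=
  MultilinearMap.alternatization (pairingProduct k)

lemma pfaffianForm_comp {k : ℕ} {g : V → V} (hg : ∀ v w, omegaForm (g v) (g w) = omegaForm v w)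
    (v : Fin k × Bool → V) : pfaffianForm k (g ∘ v) = pfaffianForm k v := by
  simp only [pfaffianForm, MultilinearMap.alternatization_apply, MultilinearMap.domDomCongr_apply,
    pairingProduct_apply, comp_apply, hg]

def symplecticIdx {k : ℕ} (p : Fin k × Bool) : ℕ ⊕ ℕ := bif p.2 then .inr p.1 else .inl p.1

lemma symplecticIdx_injective {k : ℕ} : Injective (symplecticIdx (k := k)) := by
  rintro ⟨m, _ | _⟩ ⟨m', _ | _⟩ h <;> simp_all [symplecticIdx, Fin.val_inj]

lemma symplecticIdx_flip {k : ℕ} (p : Fin k × Bool) :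
    symplecticIdx (p.1, !p.2) = (symplecticIdx p).swap := by
  rcases p with ⟨m, _ | _⟩ <;> rfl

lemma sign_swap_false (b : Bool) :
    ((Equiv.Perm.sign (Equiv.swap false b) : ℤ) : ℂ) = bif b then -1 else 1 := by
  cases b <;> simp

lemma omegaForm_symplecticIdx {k : ℕ} (p q : Fin k × Bool) :
    omegaForm (Finsupp.single (symplecticIdx p) 1) (Finsupp.single (symplecticIdx q) 1) =
      if q = (p.1, !p.2) then ((Equiv.Perm.sign (Equiv.swap false p.2) : ℤ) : ℂ) else 0 := by
  simp only [omegaForm_single_single, ← symplecticIdx_flip, symplecticIdx_injective.eq_iff,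
    sign_swap_false]
  rcases p with ⟨m, _ | _⟩ <;> rfl

lemma exists_perm_eq_prodCongr {k : ℕ} (σ : Equiv.Perm (Fin k × Bool))
    (hσ : ∀ m, σ (m, true) = ((σ (m, false)).1, !(σ (m, false)).2)) :
    ∃ π : Equiv.Perm (Fin k), σ = Equiv.prodCongrLeft (fun _ => π) *
      Equiv.prodCongrRight (fun m => Equiv.swap false (σ (m, false)).2) := by
  have hinj : Injective fun m => (σ (m, false)).1 := by
    intro m m' h
    have : σ (m', false) = σ (m, false) ∨ σ (m', false) = σ (m, true) := by
      rw [hσ m]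
      beta_reduce at h
      generalize σ (m, false) = p at h ⊢
      generalize σ (m', false) = p' at h ⊢
      obtain ⟨x, b⟩ := p
      obtain ⟨x', b'⟩ := p'
      obtain rfl : x = x' := h
      cases b <;> cases b' <;> simp
    rcases this with h' | h' <;> simpa using (σ.injective h').symm
  refine ⟨Equiv.ofBijective _ hinj.bijective_of_finite, Equiv.ext fun ⟨m, b⟩ => ?_⟩
  cases b
  · simp
  · rw [hσ m]
    cases hc : (σ (m, false)).2 <;> simp [hc]

/- Only the permutations preserving the pairs `{(m, false), (m, true)}` contribute, and for those
the sign of `σ` is the product of the signs `ω(f_j, e_j) = -1` of the flipped pairs. -/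
lemma sign_mul_pairingProduct_symplecticIdx {k : ℕ} (σ : Equiv.Perm (Fin k × Bool)) :
    ((Equiv.Perm.sign σ : ℤ) : ℂ) *
        pairingProduct k (fun p => Finsupp.single (symplecticIdx (σ p)) 1) =
      if ∀ m, σ (m, true) = ((σ (m, false)).1, !(σ (m, false)).2) then 1 else 0 := by
  simp only [pairingProduct_apply, omegaForm_symplecticIdx]
  split_ifs with hσ
  · obtain ⟨π, hπ⟩ := exists_perm_eq_prodCongr σ hσ
    have hsign : Equiv.Perm.sign σ = ∏ m, Equiv.Perm.sign (Equiv.swap false (σ (m, false)).2) := by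
      nth_rewrite 1 [hπ]
      rw [map_mul, Equiv.Perm.sign_prodCongrLeft, Equiv.Perm.sign_prodCongrRight,
        Fintype.prod_bool, Int.units_mul_self, one_mul]
    rw [prod_congr rfl fun m _ => if_pos (hσ m), hsign]
    push_cast
    rw [← prod_mul_distrib]
    refine prod_eq_one fun m _ => ?_
    rw [← Int.cast_mul, ← Units.val_mul, Int.units_mul_self, Units.val_one, Int.cast_one]
  · obtain ⟨m, hm⟩ := not_forall.mp hσ
    rw [prod_eq_zero (mem_univ m) (if_neg hm), mul_zero]

lemma pfaffianForm_symplecticIdx_ne_zero (k : ℕ) :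
    pfaffianForm k (fun p => Finsupp.single (symplecticIdx p) 1) ≠ 0 := by
  simp only [pfaffianForm, MultilinearMap.alternatization_apply, MultilinearMap.domDomCongr_apply,
    Units.smul_def, zsmul_eq_mul, sign_mul_pairingProduct_symplecticIdx, sum_boole]
  exact Nat.cast_ne_zero.mpr (card_ne_zero_of_mem (mem_filter.mpr ⟨mem_univ 1, fun _ => rfl⟩))

lemma exists_perm_mapsTo_of_card_eq {α : Type*} [DecidableEq α] {s t : Finset α} (h : #s = #t) :
    ∃ π : Equiv.Perm α, {i | π i ≠ i}.Finite ∧ ∀ i ∈ s, π i ∈ t := by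
  set U := s ∪ t
  have hcard : ∀ r ⊆ U, #(r.subtype (· ∈ U)) = #r := fun r hr => by
    rw [card_subtype, filter_true_of_mem hr]
  obtain ⟨σ, hσ⟩ := Equiv.Perm.exists_map_finset_eq (s.subtype (· ∈ U)) (t.subtype (· ∈ U))
    (by rw [hcard s subset_union_left, hcard t subset_union_right, h])
  refine ⟨Equiv.Perm.ofSubtype σ, U.finite_toSet.subset fun i hi => ?_, fun i hi => ?_⟩
  · by_contra hiU
    exact hi (Equiv.Perm.ofSubtype_apply_of_not_mem σ hiU)
  · have hiU : i ∈ U := mem_union_left _ hi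
    have : σ ⟨i, hiU⟩ ∈ t.subtype (· ∈ U) := hσ ▸ mem_map_of_mem _ (by simpa using hi)
    simpa [Equiv.Perm.ofSubtype_apply_of_mem σ hiU] using this

lemma exists_perm_eq_comp {κ X : Type*} [Finite κ] {a b : κ → X} (ha : Injective a)
    (h : ∀ i, ∃ j, a i = b j) : ∃ τ : Equiv.Perm κ, a = b ∘ τ := by
  choose f hf using h
  have hf_inj : Injective f := fun i i' hii' => ha (by rw [hf, hf, hii'])
  exact ⟨Equiv.ofBijective f hf_inj.bijective_of_finite, funext hf⟩

def spInvariants (ι : Type*) : Submodule ℂ (V [⋀^ι]→ₗ[ℂ] ℂ) where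
  carrier := {A | ∀ g : V ≃ₗ[ℂ] V, IsSp g → ∀ v : ι → V, A (g ∘ v) = A v}
  add_mem' hA hB g hg v := by simp [hA g hg v, hB g hg v]
  zero_mem' _ _ _ := rfl
  smul_mem' c A hA g hg v := by simp [hA g hg v]

def IsPaired {ι : Type*} (a : ι → ℕ ⊕ ℕ) : Prop := ∀ i, ∃ j, a j = (a i).swap

section

variable {ι : Type*} [Fintype ι]

lemma card_eq_two_mul_of_isPaired {a : ι → ℕ ⊕ ℕ} (ha : Injective a)
    (hp : IsPaired a) : Fintype.card ι = 2 * #(univ.image a).toLeft := by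
  have : (univ.image a).toRight = (univ.image a).toLeft := by
    ext n
    simp only [mem_toRight, mem_toLeft, mem_image, mem_univ, true_and]
    constructor <;> rintro ⟨i, hi⟩ <;> obtain ⟨j, hj⟩ := hp i <;> exact ⟨j, by simp [hj, hi]⟩
  rw [← card_univ, ← card_image_of_injective _ ha, ← card_toLeft_add_card_toRight, this,
    two_mul]

lemma apply_single_eq_zero_of_not_isPaired {A : V [⋀^ι]→ₗ[ℂ] ℂ} (hA : A ∈ spInvariants ι)
    {a : ι → ℕ ⊕ ℕ} (ha : Injective a) (hp : ¬IsPaired a) :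
    A (fun i => Finsupp.single (a i) 1) = 0 := by
  obtain ⟨i₀, hi₀⟩ : ∃ i₀, ∀ j, a j ≠ (a i₀).swap := by simpa [IsPaired] using hp
  set t : ℂˣ := Units.mk0 2 two_ne_zero
  have hprod : ∏ i, (scaleWeight (a i₀) t (a i) : ℂ) = 2 := by
    rw [prod_eq_single i₀ (fun i _ hi => ?_) (by simp)]
    · simp [scaleWeight, t]
    · simp [scaleWeight, ha.ne hi, hi₀ i]
  have h := hA _ (isSp_monomialEquiv_scaleWeight (a i₀) t) fun i => Finsupp.single (a i) 1
  simp only [comp_def, monomialEquiv_single, Equiv.Perm.one_apply] at h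
  rw [A.map_smul_univ, hprod, smul_eq_mul] at h
  linear_combination h

lemma exists_isSp_apply_single_eq {a₀ a : ι → ℕ ⊕ ℕ} (ha₀ : Injective a₀)
    (hp₀ : IsPaired a₀) (ha : Injective a) (hp : IsPaired a) :
    ∃ g : V ≃ₗ[ℂ] V, IsSp g ∧ ∃ τ : Equiv.Perm ι,
      ∀ i, g (Finsupp.single (a₀ i) 1) = Finsupp.single (a (τ i)) 1 := by
  obtain ⟨π, hπ, hπmaps⟩ := exists_perm_mapsTo_of_card_eq
    (s := (univ.image a₀).toLeft) (t := (univ.image a).toLeft)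
    (by have := card_eq_two_mul_of_isPaired ha₀ hp₀; have := card_eq_two_mul_of_isPaired ha hp
        omega)
  have hleft : ∀ i n, a₀ i = .inl n → ∃ j, a j = .inl (π n) := fun i n hi => by
    simpa using hπmaps n (by simpa using ⟨i, hi⟩)
  have hmem : ∀ i, ∃ j, Equiv.sumCongr π π (a₀ i) = a j := by
    intro i
    rcases hi : a₀ i with n | n
    · obtain ⟨j, hj⟩ := hleft i n hi
      exact ⟨j, by simp [hj]⟩
    · obtain ⟨i', hi'⟩ := hp₀ i
      obtain ⟨j, hj⟩ := hleft i' n (by simp [hi', hi])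
      obtain ⟨j', hj'⟩ := hp j
      exact ⟨j', by simp [hj', hj]⟩
  obtain ⟨τ, hτ⟩ := exists_perm_eq_comp ((Equiv.injective _).comp ha₀) hmem
  exact ⟨_, isSp_monomialEquiv_sumCongr π hπ, τ, fun i => by
    simpa [monomialEquiv_single] using congrArg (Finsupp.single · (1 : ℂ)) (congrFun hτ i)⟩

lemma eq_zero_of_apply_single_eq_zero {A : V [⋀^ι]→ₗ[ℂ] ℂ}
    (hA : A ∈ spInvariants ι) {a₀ : ι → ℕ ⊕ ℕ} (ha₀ : Injective a₀) (hp₀ : IsPaired a₀)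
    (h₀ : A (fun i => Finsupp.single (a₀ i) 1) = 0) : A = 0 := by
  classical
  refine Finsupp.basisSingleOne.ext_alternating fun a ha => ?_
  simp only [Finsupp.coe_basisSingleOne, AlternatingMap.zero_apply]
  by_cases hp : IsPaired a
  · obtain ⟨g, hg, τ, hgτ⟩ := exists_isSp_apply_single_eq ha₀ hp₀ ha hp
    have h := hA g hg fun i => Finsupp.single (a₀ i) 1
    simp only [comp_def, hgτ, h₀] at h
    rw [← comp_def (fun i => Finsupp.single (a i) (1 : ℂ)) τ, A.map_perm] at h
    exact (smul_eq_zero_iff_eq _).mp h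
  · exact apply_single_eq_zero_of_not_isPaired hA ha hp

lemma eq_zero_of_odd_card {A : V [⋀^ι]→ₗ[ℂ] ℂ} (hA : A ∈ spInvariants ι)
    (hodd : Odd (Fintype.card ι)) : A = 0 := by
  refine Finsupp.basisSingleOne.ext_alternating fun a ha => ?_
  simp only [Finsupp.coe_basisSingleOne, AlternatingMap.zero_apply]
  refine apply_single_eq_zero_of_not_isPaired hA ha fun hp => ?_
  rw [card_eq_two_mul_of_isPaired ha hp] at hodd
  exact Nat.not_odd_iff_even.mpr (even_two_mul _) hodd

lemma exists_eq_smul_of_apply_single_ne_zero {A A₀ : V [⋀^ι]→ₗ[ℂ] ℂ}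
    (hA : A ∈ spInvariants ι) (hA₀ : A₀ ∈ spInvariants ι) {a₀ : ι → ℕ ⊕ ℕ} (ha₀ : Injective a₀)
    (hp₀ : IsPaired a₀) (hne : A₀ (fun i => Finsupp.single (a₀ i) 1) ≠ 0) :
    ∃ c : ℂ, A = c • A₀ :=
  ⟨A (fun i => Finsupp.single (a₀ i) 1) / A₀ (fun i => Finsupp.single (a₀ i) 1),
    sub_eq_zero.mp <| eq_zero_of_apply_single_eq_zero
    (sub_mem hA (Submodule.smul_mem _ _ hA₀)) ha₀ hp₀ (by simp [div_mul_cancel₀ _ hne])⟩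

lemma exists_mem_spInvariants_apply_single_ne_zero (heven : Even (Fintype.card ι)) :
    ∃ A ∈ spInvariants ι, ∃ a : ι → ℕ ⊕ ℕ, Injective a ∧ IsPaired a ∧
      A (fun i => Finsupp.single (a i) 1) ≠ 0 := by
  obtain ⟨k, hk⟩ := heven
  let e : Fin k × Bool ≃ ι := Fintype.equivOfCardEq (by simp [hk, mul_two])
  refine ⟨(pfaffianForm k).domDomCongr e, fun g hg v => ?_, symplecticIdx ∘ e.symm,
    symplecticIdx_injective.comp e.symm.injective, fun i => ?_, ?_⟩
  · exact pfaffianForm_comp hg.1 (v ∘ e)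
  · exact ⟨e ((e.symm i).1, !(e.symm i).2), by simp [symplecticIdx_flip]⟩
  · simpa [AlternatingMap.domDomCongr_apply, comp_def] using pfaffianForm_symplecticIdx_ne_zero k

end

lemma exteriorPower.coe_map {R M N : Type*} [CommRing R] [AddCommGroup M] [Module R M]
    [AddCommGroup N] [Module R N] {n : ℕ} (f : M →ₗ[R] N) (x : ⋀[R]^n M) :
    (exteriorPower.map n f x : ExteriorAlgebra R N) = ExteriorAlgebra.map f x := by
  have : (⋀[R]^n N).subtype ∘ₗ exteriorPower.map n f =
      (ExteriorAlgebra.map f).toLinearMap ∘ₗ (⋀[R]^n M).subtype :=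
    exteriorPower.linearMap_ext (by ext v; simp [ExteriorAlgebra.map_apply_ιMulti])
  exact LinearMap.congr_fun this x

lemma spInvariantFunctional_iff {n : ℕ} (φ : ⋀[ℂ]^n V →ₗ[ℂ] ℂ) :
    SpInvariantFunctional n φ ↔
      φ.compAlternatingMap (exteriorPower.ιMulti ℂ n) ∈ spInvariants (Fin n) := by
  refine ⟨fun h g hg v => h g hg _ _ (ExteriorAlgebra.map_apply_ιMulti _ _),
    fun h g hg x y hxy => ?_⟩
  have hy : y = exteriorPower.map n (g : V →ₗ[ℂ] V) x :=
    Subtype.ext (by rw [exteriorPower.coe_map, hxy])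
  have hφ : φ ∘ₗ exteriorPower.map n (g : V →ₗ[ℂ] V) = φ :=
    exteriorPower.linearMap_ext (by ext v; simpa using h g hg v)
  rw [hy, ← LinearMap.comp_apply, hφ]

/-- The space of `Sp`-invariant linear functionals on `⋀^i V` is zero when `i`
is odd and one-dimensional when `i` is even. -/
theorem invariant_functionals_on_exterior_power (i : ℕ) :
    (Odd i → ∀ φ : ⋀[ℂ]^i V →ₗ[ℂ] ℂ, SpInvariantFunctional i φ → φ = 0) ∧
    (Even i → ∃ φ₀ : ⋀[ℂ]^i V →ₗ[ℂ] ℂ, SpInvariantFunctional i φ₀ ∧ φ₀ ≠ 0 ∧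
      ∀ φ : ⋀[ℂ]^i V →ₗ[ℂ] ℂ, SpInvariantFunctional i φ → ∃ c : ℂ, φ = c • φ₀) := by
  simp only [spInvariantFunctional_iff]
  refine ⟨fun hodd φ hφ => ?_, fun heven => ?_⟩
  · refine exteriorPower.linearMap_ext ?_
    rw [eq_zero_of_odd_card hφ (by simpa using hodd), LinearMap.zero_compAlternatingMap]
  obtain ⟨A₀, hA₀, a₀, ha₀, hp₀, hne⟩ :=
    exists_mem_spInvariants_apply_single_ne_zero (ι := Fin i) (by simpa using heven)
  refine ⟨exteriorPower.alternatingMapLinearEquiv A₀, by simpa using hA₀, fun h => hne ?_,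
    fun φ hφ => ?_⟩
  · simpa [h] using (exteriorPower.alternatingMapLinearEquiv_apply_ιMulti A₀ _).symm
  · obtain ⟨c, hc⟩ := exists_eq_smul_of_apply_single_ne_zero hφ hA₀ ha₀ hp₀ hne
    exact ⟨c, exteriorPower.linearMap_ext (by rw [hc]; ext; simp)⟩
end
end
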